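/- arXiv:2503.17580 — 9 statements merged into one kernel-verified Lean document; each statement's English description precedes it below -/
import Mathlib

section
/- Let 𝕜 be a commutative ring and A a 𝕜-algebra. Let a and b be two commuting elements of A. Suppose u_1,...,u_n ∈ 𝕜 satisfy ∏_{i=1}^n (a - u_i) = 0 and v_1,...,v_m ∈ 𝕜 satisfy ∏_{j=1}^m (b - v_j) = 0. Then ∏_{i=1}^n ∏_{j=1}^m (a + b - u_i - v_j) = 0. -/
private lemma key1 {R : Type*} [CommRing R] (t : R) :
    ∀ (L : List R), ∃ c, (L.map (t + ·)).prod = t * c + L.prod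
  | [] => ⟨0, by simp⟩
  | y :: L => by
    obtain ⟨c, hc⟩ := key1 t L
    refine ⟨(t * c + L.prod) + y * c, ?_⟩
    simp only [List.map_cons, List.prod_cons, hc]
    ring

private lemma key2 {R : Type*} [CommRing R] (M : List R) :
    ∀ (L : List R), ∃ c d,
      (L.map (fun x => (M.map (x + ·)).prod)).prod = c * L.prod + d * M.prod
  | [] => ⟨1, 0, by simp⟩
  | x :: L => by
    obtain ⟨c, d, h⟩ := key2 M L
    obtain ⟨e, he⟩ := key1 x M
    refine ⟨e * c, x * e * d + c * L.prod + d * M.prod, ?_⟩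
    simp only [List.map_cons, List.prod_cons, h, he]
    ring

/-- If `a`, `b` commute, `∏ᵢ (a - uᵢ) = 0` and `∏ⱼ (b - vⱼ) = 0` with scalars `uᵢ, vⱼ ∈ 𝕜`,
then `∏ᵢ ∏ⱼ (a + b - uᵢ - vⱼ) = 0`. -/
theorem stmt6 {𝕜 A : Type*} [CommRing 𝕜] [Ring A] [Algebra 𝕜 A]
    (a b : A) (hab : a * b = b * a) (n m : ℕ) (u : Fin n → 𝕜) (v : Fin m → 𝕜)
    (ha : (List.ofFn fun i => a - algebraMap 𝕜 A (u i)).prod = 0)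
    (hb : (List.ofFn fun j => b - algebraMap 𝕜 A (v j)).prod = 0) :
    (List.ofFn fun i => (List.ofFn fun j =>
        a + b - algebraMap 𝕜 A (u i) - algebraMap 𝕜 A (v j)).prod).prod = 0 := by
  set S := Algebra.adjoin 𝕜 ({a, b} : Set A) with hS
  letI : CommRing S := Algebra.adjoinCommRingOfComm 𝕜 (by
    rintro x (rfl | rfl) y (rfl | rfl) <;> simp [hab])
  have haS : a ∈ S := Algebra.subset_adjoin (by simp)
  have hbS : b ∈ S := Algebra.subset_adjoin (by simp)
  set a' : S := ⟨a, haS⟩ with ha'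
  set b' : S := ⟨b, hbS⟩ with hb'
  set x : Fin n → S := fun i => a' - algebraMap 𝕜 S (u i) with hx
  set y : Fin m → S := fun j => b' - algebraMap 𝕜 S (v j) with hy
  have hval : ∀ (L : List S), (S.val L.prod : A) = (L.map S.val).prod := fun L =>
    map_list_prod S.val L
  have hxa : ∀ i, (S.val (x i) : A) = a - algebraMap 𝕜 A (u i) := by
    intro i; simp [hx, ha', Algebra.algebraMap_eq_smul_one]
  have hyb : ∀ j, (S.val (y j) : A) = b - algebraMap 𝕜 A (v j) := by
    intro j; simp [hy, hb', Algebra.algebraMap_eq_smul_one]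
  have hA : (List.ofFn x).prod = 0 := by
    apply Subtype.ext
    have := hval (List.ofFn x)
    rw [List.map_ofFn] at this
    simp only [ZeroMemClass.coe_zero]
    rw [show ((List.ofFn x).prod : A) = S.val (List.ofFn x).prod from rfl, this]
    simpa only [Function.comp_def, hxa] using ha
  have hB : (List.ofFn y).prod = 0 := by
    apply Subtype.ext
    have := hval (List.ofFn y)
    rw [List.map_ofFn] at this
    simp only [ZeroMemClass.coe_zero]
    rw [show ((List.ofFn y).prod : A) = S.val (List.ofFn y).prod from rfl, this]
    simpa only [Function.comp_def, hyb] using hb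
  obtain ⟨c, d, h⟩ := key2 (List.ofFn y) ((List.ofFn x).map (fun t => t))
  -- simpler: use key2 directly with L := List.ofFn x
  obtain ⟨c', d', h'⟩ := key2 (List.ofFn y) (List.ofFn x)
  have hzero : ((List.ofFn x).map
      (fun t => ((List.ofFn y).map (t + ·)).prod)).prod = 0 := by
    rw [h', hA, hB, mul_zero, mul_zero, add_zero]
  have h2 := congrArg S.val hzero
  rw [hval, map_zero] at h2
  simp only [List.map_ofFn] at h2
  rw [← h2]
  congr 1
  congr 1
  funext i
  simp only [Function.comp_apply]
  rw [hval]
  simp only [List.map_ofFn]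
  congr 1
  congr 1
  funext j
  simp only [Function.comp_apply, map_add, hxa, hyb]
  abel
end

section
/- Let 𝕜 be a commutative ring and A a 𝕜-algebra. Let a and b be two commuting elements of A. Suppose u_1,...,u_n ∈ 𝕜 satisfy ∏_{i=1}^n (a - u_i) = 0 and v_1,...,v_m ∈ 𝕜 satisfy ∏_{j=1}^m (b - v_j) = 0. Then ∏_{i=1}^n ∏_{j=1}^m (ab - u_i v_j) = 0. -/
private lemma key_comm {R : Type*} [CommRing R] {n m : ℕ} (a b : R)
    (u : Fin n → R) (v : Fin m → R)
    (ha : ∏ i, (a - u i) = 0) (hb : ∏ j, (b - v j) = 0) :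
    ∏ i, ∏ j, (a * b - u i * v j) = 0 := by
  have h1 : ∀ i, (a - u i) ∣ ∏ j, (a * b - u i * v j) := by
    intro i
    rw [← Ideal.mem_span_singleton]
    set I := Ideal.span {a - u i}
    have hm : Ideal.Quotient.mk I (a - u i) = 0 := by
      rw [Ideal.Quotient.eq_zero_iff_mem]
      exact Ideal.subset_span rfl
    rw [← Ideal.Quotient.eq_zero_iff_mem, map_prod]
    have : ∀ j, Ideal.Quotient.mk I (a * b - u i * v j)
        = Ideal.Quotient.mk I (u i * (b - v j)) := by
      intro j
      have : a * b - u i * v j = b * (a - u i) + u i * (b - v j) := by ring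
      rw [this, map_add, map_mul, hm, mul_zero, zero_add]
    rw [Finset.prod_congr rfl fun j _ => this j, ← map_prod,
      Finset.prod_mul_distrib, Finset.prod_const, hb, mul_zero, map_zero]
  choose w hw using h1
  calc ∏ i, ∏ j, (a * b - u i * v j) = ∏ i, ((a - u i) * w i) := by
        exact Finset.prod_congr rfl fun i _ => hw i
    _ = (∏ i, (a - u i)) * ∏ i, w i := Finset.prod_mul_distrib
    _ = 0 := by rw [ha, zero_mul]

/-- If `a`, `b` commute, `∏ᵢ (a - uᵢ) = 0` and `∏ⱼ (b - vⱼ) = 0` with scalars `uᵢ, vⱼ ∈ 𝕜`,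
then `∏ᵢ ∏ⱼ (ab - uᵢvⱼ) = 0`. -/
theorem stmt7 {𝕜 A : Type*} [CommRing 𝕜] [Ring A] [Algebra 𝕜 A]
    (a b : A) (hab : a * b = b * a) (n m : ℕ) (u : Fin n → 𝕜) (v : Fin m → 𝕜)
    (ha : (List.ofFn fun i => a - algebraMap 𝕜 A (u i)).prod = 0)
    (hb : (List.ofFn fun j => b - algebraMap 𝕜 A (v j)).prod = 0) :
    (List.ofFn fun i => (List.ofFn fun j =>
        a * b - algebraMap 𝕜 A (u i * v j)).prod).prod = 0 := by
  classical
  set S := Algebra.adjoin 𝕜 ({a, b} : Set A) with hS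
  have hcomm : ∀ x ∈ ({a, b} : Set A), ∀ y ∈ ({a, b} : Set A), x * y = y * x := by
    rintro x (rfl | rfl) y (rfl | rfl) <;> simp [hab]
  letI : CommRing S := Algebra.adjoinCommRingOfComm 𝕜 hcomm
  have haS : a ∈ S := Algebra.subset_adjoin (by simp)
  have hbS : b ∈ S := Algebra.subset_adjoin (by simp)
  set a' : S := ⟨a, haS⟩
  set b' : S := ⟨b, hbS⟩
  have hpush : ∀ {k : ℕ} (g : Fin k → S),
      S.val (List.ofFn g).prod = (List.ofFn fun i => S.val (g i)).prod := by
    intro k g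
    rw [map_list_prod, List.map_ofFn]
    rfl
  have ha' : ∏ i, (a' - algebraMap 𝕜 S (u i)) = 0 := by
    apply Subtype.ext
    show S.val _ = S.val 0
    rw [map_zero, ← List.prod_ofFn, hpush]
    have : (List.ofFn fun i => S.val (a' - algebraMap 𝕜 S (u i)))
        = List.ofFn fun i => a - algebraMap 𝕜 A (u i) := by
      rfl
    rw [this, ha]
  have hb' : ∏ j, (b' - algebraMap 𝕜 S (v j)) = 0 := by
    apply Subtype.ext
    show S.val _ = S.val 0
    rw [map_zero, ← List.prod_ofFn, hpush]
    have : (List.ofFn fun j => S.val (b' - algebraMap 𝕜 S (v j)))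
        = List.ofFn fun j => b - algebraMap 𝕜 A (v j) := by
      rfl
    rw [this, hb]
  have key := key_comm a' b' (fun i => algebraMap 𝕜 S (u i))
    (fun j => algebraMap 𝕜 S (v j)) ha' hb'
  have key2 : (List.ofFn fun i => (List.ofFn fun j =>
      a' * b' - algebraMap 𝕜 S (u i * v j)).prod).prod = 0 := by
    rw [← key]
    simp only [List.prod_ofFn]
    exact Finset.prod_congr rfl fun i _ => Finset.prod_congr rfl fun j _ => by
      rw [map_mul]
  have := congrArg S.val key2
  rw [hpush, map_zero] at this
  have inner : ∀ i, S.val (List.ofFn fun j =>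
      a' * b' - algebraMap 𝕜 S (u i * v j)).prod
      = (List.ofFn fun j => a * b - algebraMap 𝕜 A (u i * v j)).prod := by
    intro i
    rw [hpush]
    rfl
  have heq : (List.ofFn fun i => S.val (List.ofFn fun j =>
      a' * b' - algebraMap 𝕜 S (u i * v j)).prod)
      = List.ofFn fun i => (List.ofFn fun j =>
        a * b - algebraMap 𝕜 A (u i * v j)).prod := by
    exact congrArg List.ofFn (funext inner)
  rw [heq] at this
  exact this
end

section
/- Let 𝕜 be a commutative ring and A a 𝕜-algebra. If a and b are two commuting split elements of A, then a + b and a·b are also split. -/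
/-- An element `a` of a `𝕜`-algebra `A` is *split* over `𝕜` if there exist finitely many
scalars `u_1, ..., u_n ∈ 𝕜` (not necessarily distinct) with `∏ (a - u_i • 1) = 0`. -/
def IsSplit (𝕜 : Type*) [CommRing 𝕜] {A : Type*} [Ring A] [Algebra 𝕜 A] (a : A) : Prop :=
  ∃ us : List 𝕜, (us.map fun u => a - algebraMap 𝕜 A u).prod = 0

/-! In a commutative ring, if `∏ᵢ (x - uᵢ) = 0`, then `z` is split as soon as its image
modulo each `x - uᵢ` is split, since the product over `i` of the corresponding witnesses is
divisible by `∏ᵢ (x - uᵢ)`. Modulo `x - u`, the elements `x + y` and `x * y` become `u + y` and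
`u * y`, which are split whenever `y` is. Two commuting elements of an arbitrary algebra
generate a commutative subalgebra, where this applies. -/

section

variable (𝕜 : Type*) [CommRing 𝕜] {A B : Type*} [Ring A] [Algebra 𝕜 A] [Ring B] [Algebra 𝕜 B]

def prodSub (a : A) (us : List 𝕜) : A :=
  (us.map fun u => a - algebraMap 𝕜 A u).prod

variable {𝕜}

theorem AlgHom.map_prodSub (f : A →ₐ[𝕜] B) (a : A) (us : List 𝕜) :
    f (prodSub 𝕜 a us) = prodSub 𝕜 (f a) us := by
  simp [prodSub, map_list_prod, Function.comp_def]

theorem IsSplit.map {a : A} (h : IsSplit 𝕜 a) (f : A →ₐ[𝕜] B) : IsSplit 𝕜 (f a) := by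
  obtain ⟨us, hus⟩ := h
  exact ⟨us, by rw [← prodSub, ← f.map_prodSub, prodSub, hus, map_zero]⟩

theorem IsSplit.of_map {a : A} {f : A →ₐ[𝕜] B} (hf : Function.Injective f)
    (h : IsSplit 𝕜 (f a)) : IsSplit 𝕜 a := by
  obtain ⟨us, hus⟩ := h
  exact ⟨us, hf <| by rw [← prodSub, f.map_prodSub, map_zero]; exact hus⟩

theorem IsSplit.algebraMap_add {a : A} (h : IsSplit 𝕜 a) (c : 𝕜) :
    IsSplit 𝕜 (algebraMap 𝕜 A c + a) := by
  obtain ⟨us, hus⟩ := h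
  refine ⟨us.map (c + ·), ?_⟩
  simpa [Function.comp_def] using hus

end

section Comm

variable {𝕜 R : Type*} [CommRing 𝕜] [CommRing R] [Algebra 𝕜 R]

theorem IsSplit.algebraMap_mul {a : R} (h : IsSplit 𝕜 a) (c : 𝕜) :
    IsSplit 𝕜 (algebraMap 𝕜 R c * a) := by
  obtain ⟨us, hus⟩ := h
  refine ⟨us.map (c * ·), ?_⟩
  have : ∀ u, algebraMap 𝕜 R c * a - algebraMap 𝕜 R (c * u) =
      algebraMap 𝕜 R c * (a - algebraMap 𝕜 R u) := fun u => by rw [map_mul, mul_sub]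
  simp only [List.map_map, Function.comp_def, this, List.prod_map_mul, hus, mul_zero]

theorem exists_prodSub_dvd_prodSub {x z : R} {us : List 𝕜}
    (h : ∀ u ∈ us, ∃ vs, x - algebraMap 𝕜 R u ∣ prodSub 𝕜 z vs) :
    ∃ ws, prodSub 𝕜 x us ∣ prodSub 𝕜 z ws := by
  induction us with
  | nil => exact ⟨[], by simp [prodSub]⟩
  | cons u us ih =>
    obtain ⟨vs, hvs⟩ := h u List.mem_cons_self
    obtain ⟨ws, hws⟩ := ih fun v hv => h v (List.mem_cons_of_mem _ hv)
    refine ⟨vs ++ ws, ?_⟩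
    simpa [prodSub] using mul_dvd_mul hvs hws

theorem IsSplit.of_isSplit_mkₐ {x z : R} {us : List 𝕜} (hx : prodSub 𝕜 x us = 0)
    (hz : ∀ u ∈ us,
      IsSplit 𝕜 (Ideal.Quotient.mkₐ 𝕜 (Ideal.span {x - algebraMap 𝕜 R u}) z)) :
    IsSplit 𝕜 z := by
  obtain ⟨ws, hws⟩ := exists_prodSub_dvd_prodSub (x := x) (z := z) fun u hu => by
    obtain ⟨vs, hvs⟩ := hz u hu
    refine ⟨vs, Ideal.mem_span_singleton.mp (Ideal.Quotient.eq_zero_iff_mem.mp ?_)⟩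
    rw [← Ideal.Quotient.mkₐ_eq_mk 𝕜, AlgHom.map_prodSub]
    exact hvs
  rw [hx, zero_dvd_iff] at hws
  exact ⟨ws, hws⟩

theorem Ideal.Quotient.mkₐ_span_sub_algebraMap (x : R) (u : 𝕜) :
    Ideal.Quotient.mkₐ 𝕜 (Ideal.span {x - algebraMap 𝕜 R u}) x = algebraMap 𝕜 _ u := by
  rw [← (Ideal.Quotient.mkₐ 𝕜 _).commutes, Ideal.Quotient.mkₐ_eq_mk, Ideal.Quotient.eq]
  exact Ideal.subset_span rfl

theorem IsSplit.add {x y : R} (hx : IsSplit 𝕜 x) (hy : IsSplit 𝕜 y) : IsSplit 𝕜 (x + y) := by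
  obtain ⟨us, hus⟩ := hx
  refine IsSplit.of_isSplit_mkₐ hus fun u _ => ?_
  rw [map_add, Ideal.Quotient.mkₐ_span_sub_algebraMap]
  exact (hy.map _).algebraMap_add u

theorem IsSplit.mul {x y : R} (hx : IsSplit 𝕜 x) (hy : IsSplit 𝕜 y) : IsSplit 𝕜 (x * y) := by
  obtain ⟨us, hus⟩ := hx
  refine IsSplit.of_isSplit_mkₐ hus fun u _ => ?_
  rw [map_mul, Ideal.Quotient.mkₐ_span_sub_algebraMap]
  exact (hy.map _).algebraMap_mul u

end Comm

/-- If `a` and `b` are two commuting split elements of a `𝕜`-algebra `A`, then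
`a + b` and `a * b` are split as well. -/
theorem stmt8 {𝕜 A : Type*} [CommRing 𝕜] [Ring A] [Algebra 𝕜 A]
    (a b : A) (hab : a * b = b * a) (ha : IsSplit 𝕜 a) (hb : IsSplit 𝕜 b) :
    IsSplit 𝕜 (a + b) ∧ IsSplit 𝕜 (a * b) := by
  let S := Algebra.adjoin 𝕜 ({a, b} : Set A)
  have : IsMulCommutative S := Algebra.isMulCommutative_adjoin 𝕜 (by
    rintro x (rfl | rfl) y (rfl | rfl) <;> simp [hab])
  open scoped IsMulCommutative in
  let a' : S := ⟨a, Algebra.subset_adjoin (by simp)⟩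
  let b' : S := ⟨b, Algebra.subset_adjoin (by simp)⟩
  have hinj : Function.Injective S.val := Subtype.val_injective
  have ha' : IsSplit 𝕜 a' := IsSplit.of_map hinj ha
  have hb' : IsSplit 𝕜 b' := IsSplit.of_map hinj hb
  exact ⟨(ha'.add hb').map S.val, (ha'.mul hb').map S.val⟩
end

section
/- Let 𝕜 be a commutative ring and A a commutative 𝕜-algebra generated (as a 𝕜-algebra) by a set of split elements. Then every element of A is split. -/
private lemma prod_shift {ι : Type*} {A : Type*} [CommRing A] (b : A) (f : ι → A) :
    ∀ l : List ι, ∃ t : A, (l.map fun i => f i + b).prod = (l.map f).prod + b * t := by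
  intro l
  induction l with
  | nil => exact ⟨0, by simp⟩
  | cons c cs ih =>
    obtain ⟨t, ht⟩ := ih
    refine ⟨f c * t + (cs.map f).prod + b * t, ?_⟩
    simp only [List.map_cons, List.prod_cons, ht]
    ring

private lemma prod_flatMap' {ι M : Type*} [CommMonoid M] (g : ι → List M) :
    ∀ l : List ι, (l.flatMap g).prod = (l.map fun x => (g x).prod).prod := by
  intro l
  induction l with
  | nil => simp
  | cons c cs ih => simp [List.flatMap_cons, List.prod_append, ih]

private lemma isSplit_add {𝕜 A : Type*} [CommRing 𝕜] [CommRing A] [Algebra 𝕜 A]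
    {a b : A} (ha : IsSplit 𝕜 a) (hb : IsSplit 𝕜 b) : IsSplit 𝕜 (a + b) := by
  obtain ⟨us, hus⟩ := ha
  obtain ⟨vs, hvs⟩ := hb
  refine ⟨us.flatMap fun u => vs.map fun v => u + v, ?_⟩
  have key : ∀ u : 𝕜, ∃ t : A,
      ((vs.map fun v => u + v).map fun w => a + b - algebraMap 𝕜 A w).prod
        = (a - algebraMap 𝕜 A u) * t := by
    intro u
    obtain ⟨t, ht⟩ := prod_shift (a - algebraMap 𝕜 A u) (fun v => b - algebraMap 𝕜 A v) vs
    refine ⟨t, ?_⟩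
    rw [List.map_map]
    have e : vs.map ((fun w => a + b - algebraMap 𝕜 A w) ∘ fun v => u + v)
        = vs.map fun v => (b - algebraMap 𝕜 A v) + (a - algebraMap 𝕜 A u) :=
      List.map_congr_left fun v _ => by simp only [Function.comp_apply, map_add]; ring
    rw [e, ht, hvs, zero_add]
  choose t ht using key
  rw [List.map_flatMap, prod_flatMap']
  calc (us.map fun u => ((vs.map fun v => u + v).map fun w => a + b - algebraMap 𝕜 A w).prod).prod
      = (us.map fun u => (a - algebraMap 𝕜 A u) * t u).prod := by
        exact congrArg List.prod (List.map_congr_left fun u _ => ht u)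
    _ = (us.map fun u => a - algebraMap 𝕜 A u).prod * (us.map t).prod := by
        rw [← List.prod_map_mul]
    _ = 0 := by rw [hus, zero_mul]

private lemma isSplit_mul {𝕜 A : Type*} [CommRing 𝕜] [CommRing A] [Algebra 𝕜 A]
    {a b : A} (ha : IsSplit 𝕜 a) (hb : IsSplit 𝕜 b) : IsSplit 𝕜 (a * b) := by
  obtain ⟨us, hus⟩ := ha
  obtain ⟨vs, hvs⟩ := hb
  refine ⟨vs.flatMap fun v => us.map fun u => u * v, ?_⟩
  have key : ∀ v : 𝕜, ∃ t : A,
      ((us.map fun u => u * v).map fun w => a * b - algebraMap 𝕜 A w).prod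
        = (b - algebraMap 𝕜 A v) * t := by
    intro v
    obtain ⟨t, ht⟩ := prod_shift ((b - algebraMap 𝕜 A v) * a)
      (fun u => algebraMap 𝕜 A v * (a - algebraMap 𝕜 A u)) us
    refine ⟨a * t, ?_⟩
    rw [List.map_map]
    have e : us.map ((fun w => a * b - algebraMap 𝕜 A w) ∘ fun u => u * v)
        = us.map fun u => (algebraMap 𝕜 A v * (a - algebraMap 𝕜 A u))
            + (b - algebraMap 𝕜 A v) * a :=
      List.map_congr_left fun u _ => by simp only [Function.comp_apply, map_mul]; ring
    rw [e, ht]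
    have h0 : (us.map fun u => algebraMap 𝕜 A v * (a - algebraMap 𝕜 A u)).prod = 0 := by
      rw [show (fun u : 𝕜 => algebraMap 𝕜 A v * (a - algebraMap 𝕜 A u))
          = fun u : 𝕜 => (fun _ : 𝕜 => algebraMap 𝕜 A v) u * (a - algebraMap 𝕜 A u) from rfl,
        List.prod_map_mul, hus, mul_zero]
    rw [h0, zero_add]
    ring
  choose t ht using key
  rw [List.map_flatMap, prod_flatMap']
  calc (vs.map fun v => ((us.map fun u => u * v).map fun w => a * b - algebraMap 𝕜 A w).prod).prod
      = (vs.map fun v => (b - algebraMap 𝕜 A v) * t v).prod := by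
        exact congrArg List.prod (List.map_congr_left fun v _ => ht v)
    _ = (vs.map fun v => b - algebraMap 𝕜 A v).prod * (vs.map t).prod := by
        rw [← List.prod_map_mul]
    _ = 0 := by rw [hvs, zero_mul]

/-- If a commutative `𝕜`-algebra `A` is generated (as a `𝕜`-algebra) by split elements,
then every element of `A` is split. -/
theorem stmt9 {𝕜 A : Type*} [CommRing 𝕜] [CommRing A] [Algebra 𝕜 A]
    (s : Set A) (hgen : Algebra.adjoin 𝕜 s = ⊤) (hs : ∀ x ∈ s, IsSplit 𝕜 x)
    (a : A) : IsSplit 𝕜 a := by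
  let S : Subalgebra 𝕜 A :=
    { carrier := {x | IsSplit 𝕜 x}
      mul_mem' := fun hx hy => isSplit_mul hx hy
      add_mem' := fun hx hy => isSplit_add hx hy
      algebraMap_mem' := fun r => ⟨[r], by simp⟩ }
  have : Algebra.adjoin 𝕜 s ≤ S := Algebra.adjoin_le hs
  rw [hgen] at this
  exact this Algebra.mem_top
end

section
/- Let 𝕜 be a commutative ring and A a 𝕜-algebra. Let b, c, d, f ∈ A be such that f is split over 𝕜, bc = fb, and c = db. Then c is split over 𝕜. -/
private lemma swap_prod {𝕜 A : Type*} [CommRing 𝕜] [Ring A] [Algebra 𝕜 A]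
    (b c f : A) (h1 : b * c = f * b) (us : List 𝕜) :
    (us.map fun u => f - algebraMap 𝕜 A u).prod * b
      = b * (us.map fun u => c - algebraMap 𝕜 A u).prod := by
  induction us with
  | nil => simp
  | cons u us ih =>
    have key : (f - algebraMap 𝕜 A u) * b = b * (c - algebraMap 𝕜 A u) := by
      rw [sub_mul, mul_sub, ← h1, Algebra.commutes]
    simp only [List.map_cons, List.prod_cons]
    rw [mul_assoc, ih, ← mul_assoc, key, mul_assoc]

/-- If `f` is split, `bc = fb` and `c = db`, then `c` is split. -/
theorem stmt10 {𝕜 A : Type*} [CommRing 𝕜] [Ring A] [Algebra 𝕜 A]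
    (b c d f : A) (hf : IsSplit 𝕜 f) (h1 : b * c = f * b) (h2 : c = d * b) :
    IsSplit 𝕜 c := by
  obtain ⟨us, hus⟩ := hf
  refine ⟨0 :: us, ?_⟩
  have hb : b * (us.map fun u => c - algebraMap 𝕜 A u).prod = 0 := by
    rw [← swap_prod b c f h1, hus, zero_mul]
  simp only [List.map_cons, List.prod_cons, map_zero, sub_zero]
  rw [h2, mul_assoc, ← h2, hb, mul_zero]
end

section
/- Let 𝕜 be a commutative ring and A a 𝕜-algebra. If a, b ∈ A are such that the product b·a is split over 𝕜, then a·b is also split over 𝕜. -/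
lemma prod_swap_aux {𝕜 A : Type*} [CommRing 𝕜] [Ring A] [Algebra 𝕜 A]
    (a b : A) (us : List 𝕜) :
    (us.map fun u => a * b - algebraMap 𝕜 A u).prod * a
      = a * (us.map fun u => b * a - algebraMap 𝕜 A u).prod := by
  induction us with
  | nil => simp
  | cons u t ih =>
    simp only [List.map_cons, List.prod_cons]
    rw [mul_assoc, ih, ← mul_assoc, ← mul_assoc]
    congr 1
    rw [sub_mul, mul_sub, mul_assoc, Algebra.commutes]

/-- If the product `b * a` is split over `𝕜`, then so is `a * b`. -/
theorem stmt11 {𝕜 A : Type*} [CommRing 𝕜] [Ring A] [Algebra 𝕜 A]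
    (a b : A) (hba : IsSplit 𝕜 (b * a)) : IsSplit 𝕜 (a * b) := by
  obtain ⟨us, h⟩ := hba
  refine ⟨us ++ [0], ?_⟩
  rw [List.map_append, List.prod_append]
  simp only [List.map_cons, List.map_nil, List.prod_cons, List.prod_nil, map_zero, sub_zero,
    mul_one]
  rw [← mul_assoc, prod_swap_aux, mul_assoc, h, zero_mul, mul_zero]
end

section
/- Let 𝕜 be a commutative ring and A a 𝕜-algebra. If a, b ∈ A satisfy b² = ab and a is split over 𝕜, then b is split over 𝕜. -/
/-- If `b² = ab` and `a` is split over `𝕜`, then `b` is split over `𝕜`. -/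
theorem stmt12 {𝕜 A : Type*} [CommRing 𝕜] [Ring A] [Algebra 𝕜 A]
    (a b : A) (h : b ^ 2 = a * b) (ha : IsSplit 𝕜 a) : IsSplit 𝕜 b := by
  obtain ⟨us, hus⟩ := ha
  have key : ∀ x : A, a * (b * x) = b * (b * x) := by
    intro x
    rw [← mul_assoc, ← mul_assoc, ← h, pow_two]
  have comm : ∀ t : List 𝕜, Commute b ((t.map fun u => b - algebraMap 𝕜 A u).prod) := by
    intro t
    apply Commute.list_prod_right
    intro x hx
    simp only [List.mem_map] at hx
    obtain ⟨u, _, rfl⟩ := hx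
    exact (Commute.refl b).sub_right (Algebra.commutes u b).symm
  have main : ∀ t : List 𝕜,
      (t.map fun u => a - algebraMap 𝕜 A u).prod * b
        = (t.map fun u => b - algebraMap 𝕜 A u).prod * b := by
    intro t
    induction t with
    | nil => rfl
    | cons u t ih =>
      simp only [List.map_cons, List.prod_cons, mul_assoc, ih]
      rw [← (comm t).eq, ← mul_assoc, ← mul_assoc, sub_mul, sub_mul, ← h, pow_two,
        ← sub_mul, ← sub_mul]
  refine ⟨us ++ [0], ?_⟩
  rw [List.map_append, List.prod_append]
  simp only [List.map_cons, List.map_nil, List.prod_cons, List.prod_nil, map_zero, sub_zero,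
    mul_one]
  rw [← main, hus, zero_mul]
end

section
/- Let 𝕜 ⊆ ℝ be a subfield of the reals (or 𝕜 = ℝ), let H be a finite-dimensional 𝕜-algebra equipped with a 𝕜-linear anti-involution x ↦ x* such that x*x = 0 implies x = 0 for all x ∈ H. Then for any x ∈ H: the set {y ∈ H : y·(x*x) = 0} equals {y ∈ H : y·x* = 0}, and the left ideal H·(x*x) equals the left ideal H·x. -/
/-- Let `𝕜` be a subfield of `ℝ` (encoded by an algebra embedding `𝕜 → ℝ`), and `H` a
finite-dimensional `𝕜`-algebra with a `𝕜`-linear anti-involution `σ` satisfying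
`σ x * x = 0 → x = 0`. Then for every `x ∈ H`, the kernel of right multiplication by
`σ(x)·x` equals that of right multiplication by `σ(x)`, and the left ideal `H·(σ(x)·x)`
equals the left ideal `H·x`. -/
theorem stmt14 (𝕜 : Type*) [Field 𝕜] [Algebra 𝕜 ℝ]
    (H : Type*) [Ring H] [Algebra 𝕜 H] [FiniteDimensional 𝕜 H]
    (σ : H →ₗ[𝕜] H)
    (hmul : ∀ a b : H, σ (a * b) = σ b * σ a)
    (hinv : ∀ a : H, σ (σ a) = a)
    (hpos : ∀ x : H, σ x * x = 0 → x = 0)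
    (x : H) :
    {y : H | y * (σ x * x) = 0} = {y : H | y * σ x = 0} ∧
    {z : H | ∃ y : H, z = y * (σ x * x)} = {z : H | ∃ y : H, z = y * x} := by
  -- Key cancellation lemma: y·σ(a)·a = 0 → y·σ(a) = 0.
  have key : ∀ a y : H, y * (σ a * a) = 0 → y * σ a = 0 := by
    intro a y h
    have hb : σ (y * σ a) = a * σ y := by rw [hmul, hinv]
    have h2 : σ (σ (y * σ a)) * σ (y * σ a) = 0 := by
      rw [hinv, hb, ← mul_assoc, mul_assoc y, h, zero_mul]
    have h3 : σ (y * σ a) = 0 := hpos _ h2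
    calc y * σ a = σ (σ (y * σ a)) := (hinv _).symm
      _ = 0 := by rw [h3, map_zero]
  have hker : {y : H | y * (σ x * x) = 0} = {y : H | y * σ x = 0} := by
    ext y
    simp only [Set.mem_setOf_eq]
    constructor
    · exact key x y
    · intro h; rw [← mul_assoc, h, zero_mul]
  refine ⟨hker, ?_⟩
  set f : H → (H →ₗ[𝕜] H) := fun a => LinearMap.mulRight 𝕜 a with hf
  have hkerf : ∀ a, LinearMap.ker (f (σ a * a)) = LinearMap.ker (f (σ a)) := by
    intro a
    ext y
    simp only [LinearMap.mem_ker, hf, LinearMap.mulRight_apply]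
    constructor
    · exact key a y
    · intro h; rw [← mul_assoc, h, zero_mul]
  have hrange_le : ∀ a b : H, LinearMap.range (f (a * b)) ≤ LinearMap.range (f b) := by
    intro a b z hz
    obtain ⟨y, hy⟩ := hz
    refine ⟨y * a, ?_⟩
    simp only [hf, LinearMap.mulRight_apply] at hy ⊢
    rw [← mul_assoc] at hy
    exact hy
  have hrk : ∀ a, Module.finrank 𝕜 (LinearMap.range (f (σ a * a))) =
      Module.finrank 𝕜 (LinearMap.range (f (σ a))) := by
    intro a
    have e1 := LinearMap.finrank_range_add_finrank_ker (f (σ a * a))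
    have e2 := LinearMap.finrank_range_add_finrank_ker (f (σ a))
    rw [hkerf a] at e1
    omega
  have r1 := hrk x
  have r2 := hrk (σ x)
  rw [hinv] at r2
  have le1 : LinearMap.range (f (σ x * x)) ≤ LinearMap.range (f x) := hrange_le (σ x) x
  have le2 : LinearMap.range (f (x * σ x)) ≤ LinearMap.range (f (σ x)) := hrange_le x (σ x)
  have m1 := Submodule.finrank_mono le1
  have m2 := Submodule.finrank_mono le2
  have hfr : Module.finrank 𝕜 (LinearMap.range (f (σ x * x))) =
      Module.finrank 𝕜 (LinearMap.range (f x)) := by omega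
  have hre : LinearMap.range (f (σ x * x)) = LinearMap.range (f x) :=
    Submodule.eq_of_le_of_finrank_eq le1 hfr
  have hset : ∀ a : H, {z : H | ∃ y : H, z = y * a} = ↑(LinearMap.range (f a)) := by
    intro a
    ext z
    simp only [Set.mem_setOf_eq, SetLike.mem_coe, LinearMap.mem_range, hf,
      LinearMap.mulRight_apply]
    exact ⟨fun ⟨y, hy⟩ => ⟨y, hy.symm⟩, fun ⟨y, hy⟩ => ⟨y, hy.symm⟩⟩
  rw [hset, hset, hre]
end

section
/- Fix n ≥ 2 and a field 𝕜 with q ∈ 𝕜 invertible. In the type-A Iwahori–Hecke algebra H_n(q) with standard generators T_1,...,T_{n-1} satisfying T_i² = (q-1)T_i + q, braid relations, and far commutation, define the Young–Jucys–Murphy element J_n = Σ_{i=1}^{n-1} q^{i-n} T_{(i,n)}, where (i,n) denotes the transposition swapping i and n. Then T_{n-1}·J_{n-1} = J_n·(T_{n-1} - q + 1) - 1. -/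
/-- The Coxeter length of a permutation of `Fin n`, i.e. its number of inversions. -/
def permLength {n : ℕ} (w : Equiv.Perm (Fin n)) : ℕ :=
  (Finset.univ.filter fun p : Fin n × Fin n => p.1 < p.2 ∧ w p.2 < w p.1).card

/-- A realization of the type-A Iwahori–Hecke algebra `H_n(q)` inside a `𝕜`-algebra `H`:
a family `T_w` (`w ∈ S_n`) with `T_1 = 1`, `T_v T_w = T_{vw}` whenever lengths add
(equivalently, `T_w = T_{i_1} ⋯ T_{i_k}` for any reduced word), and the quadratic
relation `T_s² = (q-1) T_s + q` for simple transpositions `s = (i, i+1)`. -/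
structure HeckeFamily (𝕜 : Type*) [CommRing 𝕜] (q : 𝕜) (n : ℕ)
    (H : Type*) [Ring H] [Algebra 𝕜 H] where
  T : Equiv.Perm (Fin n) → H
  T_one : T 1 = 1
  T_mul : ∀ v w : Equiv.Perm (Fin n),
    permLength (v * w) = permLength v + permLength w → T v * T w = T (v * w)
  T_quad : ∀ i j : Fin n, (i : ℕ) + 1 = (j : ℕ) →
    T (Equiv.swap i j) * T (Equiv.swap i j) =
      (q - 1) • T (Equiv.swap i j) + algebraMap 𝕜 H q

/-!
Write `s = (n-2, n-1)`. The quadratic relation gives `T_s (T_s - q + 1) = q`, and for `i < n-2`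
lengths add in `s (i, n-2) s = (i, n-1)`, so `T_{(i,n-1)} = T_s T_{(i,n-2)} T_s`. Hence every term
of `J_n` except the last, `q⁻¹ T_s`, is `T_s (q^{i-n} T_{(i,n-2)}) T_s`, and multiplying on the
right by `T_s - q + 1` turns these into the terms of `T_s J_{n-1}` and the last one into `1`.
-/

open Equiv Finset

section Perm

variable {n : ℕ}

def inversions (w : Perm (Fin n)) : Finset (Fin n × Fin n) :=
  univ.filter fun p => p.1 < p.2 ∧ w p.2 < w p.1

lemma mem_inversions {w : Perm (Fin n)} {p : Fin n × Fin n} :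
    p ∈ inversions w ↔ p.1 < p.2 ∧ w p.2 < w p.1 := by
  simp [inversions]

lemma permLength_eq_card_inversions (w : Perm (Fin n)) :
    permLength w = #(inversions w) := rfl

lemma swap_apply_lt_swap_apply_iff {a b : Fin n} (hab : (a : ℕ) + 1 = b) (u v : Fin n) :
    swap a b v < swap a b u ↔ (v < u ∧ ¬(u = b ∧ v = a)) ∨ (u = a ∧ v = b) := by
  simp only [swap_apply_def, Fin.lt_def, Fin.ext_iff]
  split_ifs <;> omega

lemma permLength_one : permLength (1 : Perm (Fin n)) = 0 := by
  simp only [permLength_eq_card_inversions, card_eq_zero, eq_empty_iff_forall_notMem,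
    mem_inversions, Perm.one_apply]
  exact fun p h => lt_asymm h.1 h.2

lemma inversions_swap_mul {a b : Fin n} (hab : (a : ℕ) + 1 = b)
    {w : Perm (Fin n)} (hw : w⁻¹ a < w⁻¹ b) :
    inversions (swap a b * w) = insert (w⁻¹ a, w⁻¹ b) (inversions w) := by
  ext ⟨x, y⟩
  simp only [mem_inversions, mem_insert, Perm.mul_apply, swap_apply_lt_swap_apply_iff hab,
    Prod.mk.injEq, Perm.eq_inv_iff_eq]
  constructor
  · rintro ⟨hxy, h | h⟩
    · exact Or.inr ⟨hxy, h.1⟩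
    · exact Or.inl h
  · rintro (⟨rfl, rfl⟩ | ⟨hxy, h⟩)
    · simp_all
    · refine ⟨hxy, Or.inl ⟨h, ?_⟩⟩
      rintro ⟨hb, ha⟩
      rw [← Perm.eq_inv_iff_eq] at hb ha
      subst hb ha
      exact lt_asymm hxy hw

lemma permLength_swap_mul {a b : Fin n} (hab : (a : ℕ) + 1 = b)
    {w : Perm (Fin n)} (hw : w⁻¹ a < w⁻¹ b) :
    permLength (swap a b * w) = permLength w + 1 := by
  have hba : ¬ b < a := by rw [Fin.lt_def]; omega
  rw [permLength_eq_card_inversions, inversions_swap_mul hab hw,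
    card_insert_of_notMem (by simp [mem_inversions, hba]), permLength_eq_card_inversions]

lemma permLength_inv (w : Perm (Fin n)) : permLength w⁻¹ = permLength w := by
  refine card_bij' (fun p _ => (w⁻¹ p.2, w⁻¹ p.1)) (fun p _ => (w p.2, w p.1)) ?_ ?_ ?_ ?_ <;>
    simp +contextual

lemma permLength_mul_swap {a b : Fin n} (hab : (a : ℕ) + 1 = b)
    {w : Perm (Fin n)} (hw : w a < w b) :
    permLength (w * swap a b) = permLength w + 1 := by
  rw [← permLength_inv, mul_inv_rev, swap_inv, permLength_swap_mul hab (by simpa using hw),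
    permLength_inv]

lemma permLength_swap {a b : Fin n} (hab : (a : ℕ) + 1 = b) :
    permLength (swap a b) = 1 := by
  have hlt : a < b := by rw [Fin.lt_def]; omega
  simpa [permLength_one] using permLength_swap_mul hab (w := 1) hlt

end Perm

lemma sum_attach_range_eq_sum_Iio {M : Type*} [AddCommMonoid M] {n : ℕ} (b : Fin n)
    (f : Fin n → M) :
    ∑ i ∈ (range b).attach, f ⟨i, (mem_range.mp i.2).trans b.2⟩ = ∑ i ∈ Iio b, f i := by
  refine sum_bij' (fun i _ => ⟨i, (mem_range.mp i.2).trans b.2⟩)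
    (fun j hj => ⟨j, mem_range.mpr (mem_Iio.mp hj : j < b)⟩) ?_ ?_ ?_ ?_ ?_ <;>
    simp +contextual [Fin.mk_lt_of_lt_val]

namespace HeckeFamily

section CommRing

variable {𝕜 : Type*} [CommRing 𝕜] {q : 𝕜} {n : ℕ} {H : Type*} [Ring H] [Algebra 𝕜 H]
  (hF : HeckeFamily 𝕜 q n H) {a b : Fin n}

lemma T_swap_mul_T_swap_sub_add_one (hab : (a : ℕ) + 1 = b) :
    hF.T (swap a b) * (hF.T (swap a b) - algebraMap 𝕜 H q + 1) = algebraMap 𝕜 H q := by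
  rw [mul_add, mul_sub, hF.T_quad a b hab, mul_one, ← Algebra.commutes, ← Algebra.smul_def,
    sub_smul, one_smul]
  abel

lemma T_swap_eq_T_swap_mul_T_swap_mul_T_swap (hab : (a : ℕ) + 1 = b) {i : Fin n} (hia : i < a) :
    hF.T (swap i b) = hF.T (swap a b) * hF.T (swap i a) * hF.T (swap a b) := by
  have hab' : a < b := by rw [Fin.lt_def]; omega
  have hib : i < b := hia.trans hab'
  have hconj : swap a b * swap i a * swap a b = swap i b := by
    rw [swap_mul_swap_mul_swap hia.ne hib.ne, swap_comm]
  have hb : swap i a b = b := swap_apply_of_ne_of_ne hib.ne' hab'.ne'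
  have hi : swap a b i = i := swap_apply_of_ne_of_ne hia.ne hib.ne
  have hleft : hF.T (swap a b) * hF.T (swap i a) = hF.T (swap a b * swap i a) := by
    refine hF.T_mul _ _ ?_
    rw [permLength_swap_mul hab (by simpa [hb] using hib),
      permLength_swap hab, add_comm]
  have hright : hF.T (swap a b * swap i a) * hF.T (swap a b)
      = hF.T (swap a b * swap i a * swap a b) := by
    refine hF.T_mul _ _ ?_
    rw [permLength_mul_swap hab (by simpa [hb, hi] using hia),
      permLength_swap hab]
  rw [hleft, hright, hconj]

end CommRing

section Field

variable {𝕜 : Type*} [Field 𝕜] {q : 𝕜} {n : ℕ} {H : Type*} [Ring H] [Algebra 𝕜 H]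
  (hF : HeckeFamily 𝕜 q n H) {a b : Fin n}

/-- With `b` read 0-indexed, this is the paper's `J_{b+1}`. -/
def jucysMurphy (b : Fin n) : H :=
  ∑ i ∈ Iio b, q⁻¹ ^ ((b : ℕ) - i) • hF.T (swap i b)

theorem T_swap_mul_jucysMurphy (hq : q ≠ 0) (hab : (a : ℕ) + 1 = b) :
    hF.T (swap a b) * hF.jucysMurphy a =
      hF.jucysMurphy b * (hF.T (swap a b) - algebraMap 𝕜 H q + 1) - 1 := by
  set S := hF.T (swap a b)
  set R := S - algebraMap 𝕜 H q + 1
  have hSR : S * R = algebraMap 𝕜 H q := hF.T_swap_mul_T_swap_sub_add_one hab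
  have hIio : Iio b = insert a (Iio a) := by
    ext i
    simp only [mem_Iio, mem_insert, Fin.lt_def, Fin.ext_iff]
    omega
  have htop : q⁻¹ ^ ((b : ℕ) - a) • S * R = 1 := by
    rw [show (b : ℕ) - a = 1 by omega, pow_one, smul_mul_assoc, hSR, Algebra.smul_def,
      ← map_mul, inv_mul_cancel₀ hq, map_one]
  have hterm : ∀ i ∈ Iio a, q⁻¹ ^ ((b : ℕ) - i) • hF.T (swap i b) * R =
      S * (q⁻¹ ^ ((a : ℕ) - i) • hF.T (swap i a)) := by
    intro i hi
    have hia : i < a := mem_Iio.mp hi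
    rw [hF.T_swap_eq_T_swap_mul_T_swap_mul_T_swap hab hia, smul_mul_assoc, mul_assoc _ S,
      hSR, ← Algebra.commutes, ← Algebra.smul_def, mul_smul_comm, smul_smul,
      show (b : ℕ) - i = (a - i) + 1 by rw [Fin.lt_def] at hia; omega, pow_succ, mul_assoc,
      inv_mul_cancel₀ hq, mul_one]
  rw [jucysMurphy, jucysMurphy, hIio, sum_insert (by simp), add_mul, htop, add_sub_cancel_left,
    sum_mul, mul_sum]
  exact sum_congr rfl fun i hi => (hterm i hi).symm

end Field

end HeckeFamily

/-- In `H_n(q)` (`n ≥ 2`, `q` invertible), with Young–Jucys–Murphy elements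
`J_n = Σ_{i=1}^{n-1} q^{i-n} T_{(i,n)}` and `J_{n-1} = Σ_{i=1}^{n-2} q^{i-n+1} T_{(i,n-1)}`
(written 0-indexed below), one has `T_{n-1} · J_{n-1} = J_n · (T_{n-1} - q + 1) - 1`. -/
theorem stmt16 (𝕜 : Type*) [Field 𝕜] (q : 𝕜) (hq : q ≠ 0) (n : ℕ) (hn : 2 ≤ n)
    (H : Type*) [Ring H] [Algebra 𝕜 H] (hF : HeckeFamily 𝕜 q n H) :
    hF.T (Equiv.swap ⟨n - 2, by omega⟩ ⟨n - 1, by omega⟩) *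
      (∑ i ∈ (Finset.range (n - 2)).attach,
        (q⁻¹ ^ (n - 2 - (i : ℕ))) •
          hF.T (Equiv.swap
            ⟨(i : ℕ), by have := Finset.mem_range.mp i.2; omega⟩ ⟨n - 2, by omega⟩)) =
    (∑ i ∈ (Finset.range (n - 1)).attach,
        (q⁻¹ ^ (n - 1 - (i : ℕ))) •
          hF.T (Equiv.swap
            ⟨(i : ℕ), by have := Finset.mem_range.mp i.2; omega⟩ ⟨n - 1, by omega⟩)) *
      (hF.T (Equiv.swap ⟨n - 2, by omega⟩ ⟨n - 1, by omega⟩) - algebraMap 𝕜 H q + 1)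
      - 1 := by
  have key := hF.T_swap_mul_jucysMurphy hq (a := ⟨n - 2, by omega⟩) (b := ⟨n - 1, by omega⟩)
    (by simp only; omega)
  simp only [HeckeFamily.jucysMurphy, ← sum_attach_range_eq_sum_Iio] at key
  exact key
end
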